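/- Let X and Y be separable metrizable spaces and let f : X → Y be Baire class 1. Then for every nonempty compact K ⊆ X, the restriction f↾K has a point of continuity. -/

import Mathlib

open Filter Topology TopologicalSpace

/-- A set is Fσ if it is a countable union of closed sets. -/
def IsFsigma {X : Type*} [TopologicalSpace X] (S : Set X) : Prop :=
  ∃ F : ℕ → Set X, (∀ n, IsClosed (F n)) ∧ S = ⋃ n, F n

/-- `f` is Baire class 1 if preimages of open sets are Fσ. -/
def BaireClassOne {X Y : Type*} [TopologicalSpace X] [TopologicalSpace Y] (f : X → Y) : Prop :=
  ∀ V : Set Y, IsOpen V → IsFsigma (f ⁻¹' V)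

/-!
A Baire class 1 function `f` into a second countable space is continuous off a meagre set:
if `f` is discontinuous at `x`, then `x ∈ f⁻¹ U \ interior (f⁻¹ U)` for some basic open `U`,
and for an Fσ set `⋃ Fₙ` this difference lies in the union of the closed nowhere dense
frontiers of the `Fₙ`. A compact subset of a metrizable space is a Baire space, and the
restriction of `f` to it is again Baire class 1, so it has a point of continuity.
-/

open Set

section

variable {X Y Z : Type*} [TopologicalSpace X] [TopologicalSpace Y] [TopologicalSpace Z]

lemma IsFsigma.preimage {S : Set X} (hS : IsFsigma S) {g : Z → X} (hg : Continuous g) :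
    IsFsigma (g ⁻¹' S) := by
  obtain ⟨F, hF, rfl⟩ := hS
  exact ⟨fun n => g ⁻¹' F n, fun n => (hF n).preimage hg, preimage_iUnion⟩

lemma BaireClassOne.comp_continuous {f : X → Y} (hf : BaireClassOne f) {g : Z → X}
    (hg : Continuous g) : BaireClassOne (f ∘ g) :=
  fun V hV => (hf V hV).preimage hg

lemma IsClosed.isNowhereDense_frontier {F : Set X} (hF : IsClosed F) :
    IsNowhereDense (frontier F) :=
  isClosed_frontier.isNowhereDense_iff.mpr (interior_frontier hF)

lemma IsFsigma.isMeagre_diff_interior {S : Set X} (hS : IsFsigma S) :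
    IsMeagre (S \ interior S) := by
  obtain ⟨F, hF, rfl⟩ := hS
  refine (isMeagre_iUnion fun n => (hF n).isNowhereDense_frontier.isMeagre).mono ?_
  rintro x ⟨hxS, hx_not_int⟩
  obtain ⟨n, hxF⟩ := mem_iUnion.mp hxS
  have hx_not_intF : x ∉ interior (F n) :=
    fun h => hx_not_int (interior_mono (subset_iUnion F n) h)
  exact mem_iUnion.mpr ⟨n, (hF n).frontier_eq ▸ ⟨hxF, hx_not_intF⟩⟩

lemma setOf_not_continuousAt_subset_biUnion {f : X → Y} {b : Set (Set Y)}
    (hb : IsTopologicalBasis b) :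
    {x | ¬ContinuousAt f x} ⊆ ⋃ U ∈ b, f ⁻¹' U \ interior (f ⁻¹' U) := by
  intro x hx_disc
  by_contra hx_mem
  apply hx_disc
  rw [ContinuousAt, hb.nhds_hasBasis.tendsto_right_iff]
  rintro U ⟨hUb, hxU⟩
  by_contra hx_not_int
  exact hx_mem (mem_biUnion hUb ⟨hxU, mt mem_interior_iff_mem_nhds.mp hx_not_int⟩)

lemma BaireClassOne.isMeagre_setOf_not_continuousAt [SecondCountableTopology Y] {f : X → Y}
    (hf : BaireClassOne f) : IsMeagre {x | ¬ContinuousAt f x} := by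
  obtain ⟨b, hbc, -, hb⟩ := exists_countable_basis Y
  exact (isMeagre_biUnion hbc fun U hU => (hf U (hb.isOpen hU)).isMeagre_diff_interior).mono
    (setOf_not_continuousAt_subset_biUnion hb)

lemma BaireClassOne.exists_continuousAt [BaireSpace X] [Nonempty X] [SecondCountableTopology Y]
    {f : X → Y} (hf : BaireClassOne f) : ∃ x, ContinuousAt f x := by
  obtain ⟨x, hx⟩ := (dense_of_mem_residual hf.isMeagre_setOf_not_continuousAt).nonempty
  exact ⟨x, not_not.mp hx⟩

end

theorem baireClassOne_restrict_continuousAt_general {X Y : Type*}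
    [TopologicalSpace X] [TopologicalSpace Y]
    [MetrizableSpace X] [SeparableSpace Y] [MetrizableSpace Y]
    (f : X → Y) (hf : BaireClassOne f) :
    ∀ K : Set X, IsCompact K → K.Nonempty →
      ∃ x : K, ContinuousAt (K.restrict f) x := by
  intro K hK hK_ne
  let := metrizableSpaceMetric Y
  have := UniformSpace.secondCountable_of_separable Y
  have := isCompact_iff_compactSpace.mp hK
  have := hK_ne.to_subtype
  exact (hf.comp_continuous continuous_subtype_val).exists_continuousAt

/-- If `X, Y` are separable metrizable spaces and `f : X → Y` is Baire class 1, then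
the restriction of `f` to every nonempty compact `K ⊆ X` has a point of continuity. -/
theorem baireClassOne_restrict_continuousAt {X Y : Type*}
    [TopologicalSpace X] [TopologicalSpace Y]
    [SeparableSpace X] [MetrizableSpace X] [SeparableSpace Y] [MetrizableSpace Y]
    (f : X → Y) (hf : BaireClassOne f) :
    ∀ K : Set X, IsCompact K → K.Nonempty →
      ∃ x : K, ContinuousAt (K.restrict f) x :=
  baireClassOne_restrict_continuousAt_general f hf
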